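/- Let f : ℝ^n → ℝ be convex and continuously differentiable with a global minimizer x*. Let sequences (x^k), (y^k), (u^k) in ℝ^n, positive reals (L_k) and reals (a_k), (A_k) satisfy: A_0 = 0, u^0 = y^0, and for every k ≥ 0: a_{k+1} = (1/L_k + sqrt(1/L_k^2 + 4 A_k/L_k))/2, A_{k+1} = A_k + a_{k+1}, x^k = (A_k/A_{k+1}) y^k + (a_{k+1}/A_{k+1}) u^k, ∥∇f(y^{k+1}) + L_k (y^{k+1} − x^k)∥ ≤ (L_k/2) ∥y^{k+1} − x^k∥, and u^{k+1} = u^k − a_{k+1} ∇f(y^{k+1}). Set R = ∥y^0 − x*∥. Then for all N ≥ 1: (i) (1/2)∥u^N − x*∥^2 + A_N (f(y^N) − f(x*)) + (1/4) Σ_{k=1}^N A_k L_{k−1} ∥y^k − x^{k−1}∥^2 ≤ R^2/2; (ii) f(y^N) − f(x*) ≤ R^2/(2 A_N) and ∥u^N − x*∥ ≤ R; (iii) Σ_{k=1}^N A_k L_{k−1} ∥y^k − x^{k−1}∥^2 ≤ 2 R^2. -/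

import Mathlib

/-!
The energy `E k = ½‖u k - x⋆‖² + A k (f (y k) - f x⋆)` decreases by at least
`¼ A (k+1) L k ‖y (k+1) - x k‖²` at every step. Indeed, with `g = ∇f (y (k+1))`, adding the
gradient inequalities at `y (k+1)` towards `y k` and towards `x⋆` with weights `A k` and
`a (k+1)` pays for the change of `½‖u - x⋆‖²` up to a term `a (k+1)² ‖g‖² / 2`; the step-size rule
`L k a (k+1)² = A (k+1)` turns it into `A (k+1) ‖g‖² / (2 L k)`, which the relative error
condition on `‖g + L k (y (k+1) - x k)‖` controls. Telescoping gives (i), and dropping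
nonnegative terms from (i) gives (ii) and (iii).
-/

open Set
open scoped RealInnerProductSpace

theorem ConvexOn.add_fderiv_sub_le {E : Type*} [NormedAddCommGroup E] [NormedSpace ℝ E]
    {s : Set E} {f : E → ℝ} {f' : E →L[ℝ] ℝ} {w z : E} (hf : ConvexOn ℝ s f)
    (hw : w ∈ s) (hz : z ∈ s) (hfw : HasFDerivAt f f' w) :
    f w + f' (z - w) ≤ f z := by
  have hline : ConvexOn ℝ (AffineMap.lineMap (k := ℝ) w z ⁻¹' s)
      (f ∘ AffineMap.lineMap (k := ℝ) w z) :=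
    hf.comp_affineMap _
  have hderiv : HasDerivAt (f ∘ AffineMap.lineMap (k := ℝ) w z) (f' (z - w)) 0 := by
    refine HasFDerivAt.comp_hasDerivAt (0 : ℝ) ?_ AffineMap.hasDerivAt_lineMap
    simpa using hfw
  have hslope := hline.le_slope_of_hasDerivAt (x := 0) (y := 1) (by simpa using hw)
    (by simpa using hz) zero_lt_one hderiv
  simp only [slope_def_field, Function.comp_apply, AffineMap.lineMap_apply_zero,
    AffineMap.lineMap_apply_one, sub_zero, div_one] at hslope
  linarith

theorem ConvexOn.add_inner_sub_le {E : Type*} [NormedAddCommGroup E] [InnerProductSpace ℝ E]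
    [CompleteSpace E] {s : Set E} {f : E → ℝ} {g w z : E} (hf : ConvexOn ℝ s f)
    (hw : w ∈ s) (hz : z ∈ s) (hfw : HasGradientAt f g w) :
    f w + ⟪g, z - w⟫ ≤ f z :=
  hf.add_fderiv_sub_le hw hz hfw.hasFDerivAt

/-- The positive root `a` of `L a² = A + a`. -/
noncomputable def hpeStepSize (L A : ℝ) : ℝ := (1 / L + √(1 / L ^ 2 + 4 * A / L)) / 2

theorem hpeStepSize_pos {L A : ℝ} (hL : 0 < L) : 0 < hpeStepSize L A := by
  unfold hpeStepSize
  positivity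

theorem mul_hpeStepSize_sq {L A : ℝ} (hL : 0 < L) (hA : 0 ≤ A) :
    L * hpeStepSize L A ^ 2 = A + hpeStepSize L A := by
  have hsq : √(1 / L ^ 2 + 4 * A / L) ^ 2 = 1 / L ^ 2 + 4 * A / L :=
    Real.sq_sqrt (by positivity)
  unfold hpeStepSize
  generalize √(1 / L ^ 2 + 4 * A / L) = s at hsq ⊢
  field_simp at hsq ⊢
  linear_combination hsq

theorem hpe_weight_nonneg {L a A : ℕ → ℝ} (hL : ∀ k, 0 < L k) (hA0 : A 0 = 0)
    (ha : ∀ k, a (k + 1) = hpeStepSize (L k) (A k)) (hA : ∀ k, A (k + 1) = A k + a (k + 1))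
    (k : ℕ) : 0 ≤ A k := by
  induction k with
  | zero => exact hA0.ge
  | succ k ih => rw [hA k, ha k]; exact add_nonneg ih (hpeStepSize_pos (hL k)).le

section InnerProductSpace

variable {E : Type*} [NormedAddCommGroup E] [InnerProductSpace ℝ E]

theorem neg_inner_sub_norm_sq_div_eq (g d : E) {L : ℝ} (hL : L ≠ 0) :
    -⟪g, d⟫ - ‖g‖ ^ 2 / (2 * L) = L / 2 * ‖d‖ ^ 2 - ‖g + L • d‖ ^ 2 / (2 * L) := by
  rw [norm_add_sq_real, norm_smul, real_inner_smul_right, Real.norm_eq_abs, mul_pow, sq_abs]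
  field_simp
  ring

theorem hpe_energy_decrease {f : E → ℝ} {xstar x y y' u u' g : E} {L a A A' : ℝ}
    (hL : 0 < L) (hA : 0 ≤ A) (ha : 0 ≤ a) (hA' : A' = A + a) (haL : L * a ^ 2 = A')
    (hx : A' • x = A • y + a • u) (hg : ∀ z, f y' + ⟪g, z - y'⟫ ≤ f z)
    (herr : ‖g + L • (y' - x)‖ ≤ L / 2 * ‖y' - x‖) (hu : u' = u - a • g) :
    1 / 2 * ‖u' - xstar‖ ^ 2 + A' * (f y' - f xstar) + 1 / 4 * (A' * L * ‖y' - x‖ ^ 2)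
      ≤ 1 / 2 * ‖u - xstar‖ ^ 2 + A * (f y - f xstar) := by
  have hu_sq : ‖u' - xstar‖ ^ 2
      = ‖u - xstar‖ ^ 2 - 2 * a * ⟪g, u - xstar⟫ + a ^ 2 * ‖g‖ ^ 2 := by
    rw [hu, sub_right_comm, norm_sub_sq_real, norm_smul, real_inner_smul_right, real_inner_comm,
      Real.norm_eq_abs, mul_pow, sq_abs]
    ring
  have hinner : A * ⟪g, y - y'⟫ + a * ⟪g, xstar - y'⟫
      = A' * ⟪g, x - y'⟫ - a * ⟪g, u - xstar⟫ := by
    have hgx := congrArg (inner ℝ g) hx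
    simp only [inner_add_right, real_inner_smul_right] at hgx
    simp only [inner_sub_right]
    linear_combination -hgx + ⟪g, y'⟫ * hA'
  have hconv : A' * f y' + A' * ⟪g, x - y'⟫ - a * ⟪g, u - xstar⟫ ≤ A * f y + a * f xstar := by
    linear_combination mul_le_mul_of_nonneg_left (hg y) hA
      + mul_le_mul_of_nonneg_left (hg xstar) ha - hinner + f y' * hA'
  have hdecr : L / 4 * ‖y' - x‖ ^ 2 ≤ ⟪g, x - y'⟫ - ‖g‖ ^ 2 / (2 * L) := by
    have hid := neg_inner_sub_norm_sq_div_eq g (y' - x) hL.ne'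
    rw [← inner_neg_right, neg_sub] at hid
    have herr_sq : ‖g + L • (y' - x)‖ ^ 2 ≤ (L / 2 * ‖y' - x‖) ^ 2 :=
      pow_le_pow_left₀ (norm_nonneg _) herr 2
    rw [hid, le_sub_iff_add_le, ← le_sub_iff_add_le', div_le_iff₀ (by positivity)]
    nlinarith
  have hgsq : A' * (‖g‖ ^ 2 / (2 * L)) = a ^ 2 / 2 * ‖g‖ ^ 2 := by
    rw [← haL]
    field_simp
  linear_combination 1 / 2 * hu_sq + hconv - f xstar * hA' - hgsq
    + mul_le_mul_of_nonneg_left hdecr (show 0 ≤ A' by rw [← haL]; positivity)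

end InnerProductSpace

theorem add_sum_Icc_le_of_succ_add_le {e c : ℕ → ℝ} (h : ∀ k, e (k + 1) + c (k + 1) ≤ e k)
    (N : ℕ) : e N + ∑ k ∈ Finset.Icc 1 N, c k ≤ e 0 := by
  induction N with
  | zero => simp
  | succ N ih =>
    rw [Finset.sum_Icc_succ_top (by omega)]
    linarith [h N]

theorem accelerated_hpe_convergence {n : ℕ}
    (f : EuclideanSpace ℝ (Fin n) → ℝ)
    (hconv : ConvexOn ℝ Set.univ f) (hf : ContDiff ℝ 1 f)
    (xstar : EuclideanSpace ℝ (Fin n)) (hmin : ∀ z, f xstar ≤ f z)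
    (x y u : ℕ → EuclideanSpace ℝ (Fin n))
    (L a A : ℕ → ℝ) (hL : ∀ k, 0 < L k)
    (hA0 : A 0 = 0) (hu0 : u 0 = y 0)
    (ha : ∀ k, a (k + 1) = (1 / L k + Real.sqrt (1 / (L k) ^ 2 + 4 * A k / L k)) / 2)
    (hA : ∀ k, A (k + 1) = A k + a (k + 1))
    (hx : ∀ k, x k = (A k / A (k + 1)) • y k + (a (k + 1) / A (k + 1)) • u k)
    (hy : ∀ k, ‖gradient f (y (k + 1)) + L k • (y (k + 1) - x k)‖
        ≤ (L k / 2) * ‖y (k + 1) - x k‖)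
    (hu : ∀ k, u (k + 1) = u k - a (k + 1) • gradient f (y (k + 1))) :
    ∀ N : ℕ, 1 ≤ N →
      ((1 / 2) * ‖u N - xstar‖ ^ 2 + A N * (f (y N) - f xstar)
          + (1 / 4) * ∑ k ∈ Finset.Icc 1 N, A k * L (k - 1) * ‖y k - x (k - 1)‖ ^ 2
        ≤ ‖y 0 - xstar‖ ^ 2 / 2) ∧
      (f (y N) - f xstar ≤ ‖y 0 - xstar‖ ^ 2 / (2 * A N)) ∧
      (‖u N - xstar‖ ≤ ‖y 0 - xstar‖) ∧
      (∑ k ∈ Finset.Icc 1 N, A k * L (k - 1) * ‖y k - x (k - 1)‖ ^ 2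
        ≤ 2 * ‖y 0 - xstar‖ ^ 2) := by
  have hgrad : ∀ w z, f w + ⟪gradient f w, z - w⟫ ≤ f z := fun w z =>
    hconv.add_inner_sub_le (mem_univ w) (mem_univ z)
      (hf.differentiable one_ne_zero).differentiableAt.hasGradientAt
  have hA_nonneg : ∀ k, 0 ≤ A k := hpe_weight_nonneg hL hA0 ha hA
  have ha_pos : ∀ k, 0 < a (k + 1) := fun k => by
    rw [ha k]; exact hpeStepSize_pos (hL k)
  have hA_succ_pos : ∀ k, 0 < A (k + 1) := fun k => by
    rw [hA k]; exact add_pos_of_nonneg_of_pos (hA_nonneg k) (ha_pos k)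
  have hstep : ∀ k, 1 / 2 * ‖u (k + 1) - xstar‖ ^ 2 + A (k + 1) * (f (y (k + 1)) - f xstar)
      + 1 / 4 * (A (k + 1) * L k * ‖y (k + 1) - x k‖ ^ 2)
      ≤ 1 / 2 * ‖u k - xstar‖ ^ 2 + A k * (f (y k) - f xstar) := fun k => by
    refine hpe_energy_decrease (hL k) (hA_nonneg k) (ha_pos k).le (hA k) ?_ ?_ (hgrad _) (hy k)
      (hu k)
    · rw [hA k, ha k]; exact mul_hpeStepSize_sq (hL k) (hA_nonneg k)
    · rw [hx k, smul_add, smul_smul, smul_smul, mul_div_cancel₀ _ (hA_succ_pos k).ne',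
        mul_div_cancel₀ _ (hA_succ_pos k).ne']
  intro N hN
  have hi := add_sum_Icc_le_of_succ_add_le
    (e := fun k => 1 / 2 * ‖u k - xstar‖ ^ 2 + A k * (f (y k) - f xstar))
    (c := fun k => 1 / 4 * (A k * L (k - 1) * ‖y k - x (k - 1)‖ ^ 2)) hstep N
  simp only [hA0, hu0, zero_mul, add_zero, ← Finset.mul_sum] at hi
  have hAN : 0 < A N := by obtain ⟨k, rfl⟩ := Nat.exists_eq_add_one.mpr hN; exact hA_succ_pos k
  have hgap : 0 ≤ A N * (f (y N) - f xstar) := mul_nonneg hAN.le (sub_nonneg.mpr (hmin _))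
  have hsum : 0 ≤ ∑ k ∈ Finset.Icc 1 N, A k * L (k - 1) * ‖y k - x (k - 1)‖ ^ 2 :=
    Finset.sum_nonneg fun k _ => by have := hA_nonneg k; have := hL (k - 1); positivity
  have hu_sq := sq_nonneg ‖u N - xstar‖
  refine ⟨by linarith, ?_, ?_, by linarith⟩
  · rw [le_div_iff₀ (by positivity)]
    linarith
  · exact (pow_le_pow_iff_left₀ (norm_nonneg _) (norm_nonneg _) two_ne_zero).mp (by linarith)
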